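/- arXiv:2202.07578 — 3 statements merged into one kernel-verified Lean document; each statement's English description precedes it below -/
import Mathlib

section
/- (Wiener) Let 𝓔 ⊆ L²(𝕋) be a closed subspace invariant under multiplication by z and satisfying z·𝓔 = 𝓔 (doubly invariant). Then there exists a Borel set A ⊆ 𝕋 such that 𝓔 = 1_A · L²(𝕋). -/
open MeasureTheory Complex

noncomputable instance : Fact (0 < 2 * Real.pi) := ⟨by positivity⟩

/-!
Multiplication by `z` and by `z⁻¹` preserve `𝓔`, hence so does multiplication by every
character `zⁿ`. For `f ∈ 𝓔` and `v ⊥ 𝓔` the integrable function `f v̄` then has Fourier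
coefficients `⟪v, z⁻ⁿ f⟫ = 0`, so it vanishes a.e.: the functional `u ↦ ∫ u f v̄` on `C(𝕋)`
vanishes on the dense span of the characters, and continuous functions approximate indicators
of closed sets. Split `1 = φ + ψ` with `φ ∈ 𝓔`, `ψ ⊥ 𝓔` and put `A = {ψ = 0}`. Every `f ∈ 𝓔`
vanishes where `ψ ≠ 0`; conversely, if `h` vanishes off `A` and `v ⊥ 𝓔`, then `v̄ = φ v̄ = 0`
a.e. on `A`, so `h v̄ = 0` a.e. and `h ∈ 𝓔ᗮᗮ = 𝓔`.
-/

open Filter Topology BoundedContinuousFunction HasOuterApproxClosed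
open scoped NNReal ComplexConjugate

namespace MeasureTheory

theorem ae_eq_zero_of_forall_integral_bcf_smul_eq_zero {X E : Type*} [TopologicalSpace X]
    [MeasurableSpace X] [BorelSpace X] [HasOuterApproxClosed X] {μ : Measure X}
    [NormedAddCommGroup E] [NormedSpace ℝ E] [CompleteSpace E] {f : X → E}
    (hf : Integrable f μ) (h : ∀ u : X →ᵇ ℝ≥0, ∫ x, (u x : ℝ) • f x ∂μ = 0) :
    f =ᵐ[μ] 0 := by
  refine ae_eq_zero_of_forall_setIntegral_isClosed_eq_zero hf fun F hF => ?_
  have hlim : Tendsto (fun n => ∫ x, (hF.apprSeq n x : ℝ) • f x ∂μ) atTop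
      (𝓝 (∫ x, F.indicator f x ∂μ)) := by
    refine tendsto_integral_of_dominated_convergence (‖f ·‖)
      (fun n => (NNReal.continuous_coe.comp (hF.apprSeq n).continuous).aestronglyMeasurable.smul
        hf.aestronglyMeasurable) hf.norm (fun n => .of_forall fun x => ?_) (.of_forall fun x => ?_)
    · rw [norm_smul, NNReal.norm_eq]
      exact mul_le_of_le_one_left (norm_nonneg _) (by exact_mod_cast apprSeq_apply_le_one hF n x)
    · have := (((NNReal.continuous_coe.tendsto _).comp
        (tendsto_pi_nhds.1 (tendsto_apprSeq hF) x)).smul_const (f x))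
      by_cases hx : x ∈ F <;> simpa [hx] using this
  simp only [h, integral_indicator hF.measurableSet] at hlim
  exact tendsto_nhds_unique hlim tendsto_const_nhds

theorem exists_measurableSet_mem_iff_of_mul_conj_ae_eq_zero {α 𝕜 : Type*} [MeasurableSpace α]
    {μ : Measure α} [IsFiniteMeasure μ] [RCLike 𝕜] (K : Submodule 𝕜 (Lp 𝕜 2 μ))
    [K.HasOrthogonalProjection] (hK : ∀ f ∈ K, ∀ v ∈ Kᗮ, (fun x => f x * conj (v x)) =ᵐ[μ] 0) :
    ∃ A : Set α, MeasurableSet A ∧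
      ∀ h : Lp 𝕜 2 μ, h ∈ K ↔ ∀ᵐ x ∂μ, x ∉ A → h x = 0 := by
  set φ := K.starProjection (Lp.const 2 μ 1)
  set ψ := Lp.const 2 μ 1 - φ
  have hφ : φ ∈ K := K.starProjection_apply_mem _
  have hψ : ψ ∈ Kᗮ := K.sub_starProjection_mem_orthogonal _
  have hφψ : ∀ᵐ x ∂μ, φ x = 1 - ψ x := by
    filter_upwards [Lp.coeFn_sub (Lp.const 2 μ (1 : 𝕜)) φ, Lp.coeFn_const 2 μ (1 : 𝕜)]
      with x hsub hone
    rw [hsub, Pi.sub_apply, hone, Function.const_apply, sub_sub_cancel]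
  have hvanish : ∀ f ∈ K, ∀ᵐ x ∂μ, ψ x ≠ 0 → f x = 0 := fun f hf => by
    filter_upwards [hK f hf ψ hψ] with x hx hψx
    simpa [hψx] using hx
  refine ⟨{x | ψ x = 0}, (Lp.stronglyMeasurable ψ).measurable (measurableSet_singleton 0),
    fun h => ⟨hvanish h, fun hh => ?_⟩⟩
  rw [← K.orthogonal_orthogonal, Submodule.mem_orthogonal]
  intro w hw
  rw [L2.inner_def]
  refine integral_eq_zero_of_ae ?_
  filter_upwards [hK φ hφ w hw, hφψ, hh] with x hφw hφx hhx
  by_cases hψx : ψ x = 0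
  · rw [hψx, sub_zero] at hφx
    rw [Pi.zero_apply, hφx, one_mul] at hφw
    simp [RCLike.inner_apply, hφw]
  · simp [hhx hψx]

end MeasureTheory

namespace MeasureTheory.Integrable

variable {X 𝕜 E : Type*} [TopologicalSpace X] [CompactSpace X] [MeasurableSpace X]
  [OpensMeasurableSpace X] {μ : Measure X} [RCLike 𝕜] [NormedAddCommGroup E]
  [NormedSpace 𝕜 E] {f : X → E}

theorem continuousMap_smul (hf : Integrable f μ) (u : C(X, 𝕜)) :
    Integrable (fun x => u x • f x) μ :=
  hf.bdd_smul ‖u‖ u.continuous.aestronglyMeasurable (.of_forall u.norm_coe_le_norm)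

variable [NormedSpace ℝ E] [SMulCommClass ℝ 𝕜 E]

noncomputable def integralSMulCLM (hf : Integrable f μ) : C(X, 𝕜) →L[𝕜] E :=
  LinearMap.mkContinuous
    { toFun := fun u => ∫ x, u x • f x ∂μ
      map_add' := fun u v => by
        simp only [ContinuousMap.add_apply, add_smul]
        exact integral_add (hf.continuousMap_smul u) (hf.continuousMap_smul v)
      map_smul' := fun c u => by
        simp only [ContinuousMap.smul_apply, smul_eq_mul, RingHom.id_apply, mul_smul]
        exact MeasureTheory.integral_smul c _ }
    (∫ x, ‖f x‖ ∂μ) fun u => by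
      rw [mul_comm, ← integral_const_mul]
      refine norm_integral_le_of_norm_le (hf.norm.const_mul _) (.of_forall fun x => ?_)
      rw [norm_smul]
      exact mul_le_mul_of_nonneg_right (u.norm_coe_le_norm x) (norm_nonneg _)

theorem integralSMulCLM_apply (hf : Integrable f μ) (u : C(X, 𝕜)) :
    hf.integralSMulCLM u = ∫ x, u x • f x ∂μ :=
  rfl

end MeasureTheory.Integrable

namespace AddCircle

variable {T : ℝ} [Fact (0 < T)]

theorem ae_eq_zero_of_fourierCoeff_eq_zero {E : Type*} [NormedAddCommGroup E] [NormedSpace ℂ E]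
    [CompleteSpace E] {f : AddCircle T → E}
    (hf : Integrable f haarAddCircle) (h : ∀ n, fourierCoeff f n = 0) :
    f =ᵐ[haarAddCircle] 0 := by
  have hΛ : hf.integralSMulCLM (𝕜 := ℂ) = 0 := by
    refine ContinuousLinearMap.ext_on (Submodule.dense_iff_topologicalClosure_eq_top.2
      span_fourier_closure_eq_top) ?_
    rintro _ ⟨n, rfl⟩
    simpa [Integrable.integralSMulCLM_apply, fourierCoeff] using h (-n)
  refine ae_eq_zero_of_forall_integral_bcf_smul_eq_zero hf fun u => ?_
  have hu := congr($hΛ ⟨fun x => ((u x : ℝ) : ℂ), by fun_prop⟩)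
  simpa only [Integrable.integralSMulCLM_apply, ContinuousMap.coe_mk, Complex.coe_smul,
    zero_apply] using hu

theorem memLp_fourier_mul (n : ℤ) (g : Lp ℂ 2 (haarAddCircle (T := T))) :
    MemLp (fun θ => fourier n θ * g θ) 2 haarAddCircle :=
  (Lp.memLp g).of_le_mul ((fourier n).continuous.aestronglyMeasurable.mul
    (Lp.aestronglyMeasurable g)) (c := 1)
    (.of_forall fun θ => by rw [norm_mul, fourier_apply, Circle.norm_coe, one_mul])

noncomputable def fourierMul (n : ℤ) (g : Lp ℂ 2 (haarAddCircle (T := T))) :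
    Lp ℂ 2 (haarAddCircle (T := T)) :=
  (memLp_fourier_mul n g).toLp _

theorem coeFn_fourierMul (n : ℤ) (g : Lp ℂ 2 (haarAddCircle (T := T))) :
    fourierMul n g =ᵐ[haarAddCircle] fun θ => fourier n θ * g θ :=
  MemLp.coeFn_toLp _

theorem eq_fourierMul_of_ae_eq {n : ℤ} {g h : Lp ℂ 2 (haarAddCircle (T := T))}
    (hh : h =ᵐ[haarAddCircle] fun θ => fourier n θ * g θ) : h = fourierMul n g :=
  Lp.ext (hh.trans (coeFn_fourierMul n g).symm)

@[simp]
theorem fourierMul_zero (g : Lp ℂ 2 (haarAddCircle (T := T))) : fourierMul 0 g = g :=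
  (eq_fourierMul_of_ae_eq (.of_forall fun θ => by simp)).symm

theorem fourierMul_fourierMul (m n : ℤ) (g : Lp ℂ 2 (haarAddCircle (T := T))) :
    fourierMul m (fourierMul n g) = fourierMul (m + n) g := by
  refine eq_fourierMul_of_ae_eq ?_
  filter_upwards [coeFn_fourierMul m (fourierMul n g), coeFn_fourierMul n g] with θ h₁ h₂
  rw [h₁, h₂, ← mul_assoc, fourier_add]

theorem fourierMul_mem_of_forall_mem {K : Submodule ℂ (Lp ℂ 2 (haarAddCircle (T := T)))}
    (hKpos : ∀ g ∈ K, fourierMul 1 g ∈ K) (hKneg : ∀ g ∈ K, fourierMul (-1) g ∈ K) (n : ℤ) :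
    ∀ g ∈ K, fourierMul n g ∈ K := by
  induction n using Int.induction_on with
  | zero => simp
  | succ i ih =>
    intro g hg
    simpa [fourierMul_fourierMul, add_comm] using hKpos _ (ih g hg)
  | pred i ih =>
    intro g hg
    simpa [fourierMul_fourierMul, sub_eq_neg_add] using hKneg _ (ih g hg)

theorem mul_conj_ae_eq_zero_of_mem_orthogonal
    {K : Submodule ℂ (Lp ℂ 2 (haarAddCircle (T := T)))}
    (hK : ∀ n, ∀ g ∈ K, fourierMul n g ∈ K) {f v : Lp ℂ 2 (haarAddCircle (T := T))}
    (hf : f ∈ K) (hv : v ∈ Kᗮ) :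
    (fun θ => f θ * conj (v θ)) =ᵐ[haarAddCircle] 0 := by
  refine ae_eq_zero_of_fourierCoeff_eq_zero (L2.integrable_inner v f) fun n => ?_
  calc fourierCoeff (fun θ => f θ * conj (v θ)) n
      = ∫ θ, inner ℂ (v θ) (fourierMul (-n) f θ) ∂haarAddCircle := by
        refine integral_congr_ae ?_
        filter_upwards [coeFn_fourierMul (-n) f] with θ hθ
        rw [hθ, RCLike.inner_apply, smul_eq_mul, mul_assoc]
    _ = 0 := by
        rw [← L2.inner_def, Submodule.inner_left_of_mem_orthogonal (hK _ _ hf) hv]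

end AddCircle

/-- Wiener's theorem: a doubly invariant closed subspace of `L²(𝕋)` is of the form
`1_A · L²(𝕋)` for a Borel set `A ⊆ 𝕋`, i.e. it consists exactly of the functions
vanishing a.e. off `A`. -/
theorem wiener_doubly_invariant
    (𝓔 : Submodule ℂ (Lp ℂ 2 (AddCircle.haarAddCircle (T := 2 * Real.pi))))
    (hclosed : IsClosed (𝓔 : Set (Lp ℂ 2 (AddCircle.haarAddCircle (T := 2 * Real.pi)))))
    (hinv : ∀ g ∈ 𝓔, ∀ h : Lp ℂ 2 (AddCircle.haarAddCircle (T := 2 * Real.pi)),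
      (⇑h =ᵐ[AddCircle.haarAddCircle] fun θ => fourier (1 : ℤ) θ * g θ) → h ∈ 𝓔)
    (hsurj : ∀ g ∈ 𝓔, ∃ g' ∈ 𝓔,
      ⇑g =ᵐ[AddCircle.haarAddCircle] fun θ => fourier (1 : ℤ) θ * g' θ) :
    ∃ A : Set (AddCircle (2 * Real.pi)), MeasurableSet A ∧
      ∀ h : Lp ℂ 2 (AddCircle.haarAddCircle (T := 2 * Real.pi)),
        h ∈ 𝓔 ↔ (∀ᵐ θ ∂(AddCircle.haarAddCircle), θ ∉ A → h θ = 0) := by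
  have : CompleteSpace 𝓔 := hclosed.completeSpace_coe
  have hpos : ∀ g ∈ 𝓔, AddCircle.fourierMul 1 g ∈ 𝓔 := fun g hg =>
    hinv g hg _ (AddCircle.coeFn_fourierMul 1 g)
  have hneg : ∀ g ∈ 𝓔, AddCircle.fourierMul (-1) g ∈ 𝓔 := fun g hg => by
    obtain ⟨g', hg', hgg'⟩ := hsurj g hg
    rwa [AddCircle.eq_fourierMul_of_ae_eq hgg', AddCircle.fourierMul_fourierMul, neg_add_cancel,
      AddCircle.fourierMul_zero]
  exact exists_measurableSet_mem_iff_of_mul_conj_ae_eq_zero 𝓔 fun f hf v hv =>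
    AddCircle.mul_conj_ae_eq_zero_of_mem_orthogonal
      (AddCircle.fourierMul_mem_of_forall_mem hpos hneg) hf hv
end

section
/- For 0 < q < 1 write q = e^{−r} with r > 0, and let dilog(1−z) = ∑_{n≥1} zⁿ/n² for |z| < 1. Then for every compact subset of the open unit disc there exists C > 0 such that |−log (z;q)_∞ − r^{−1}·dilog(1−z)| ≤ C for all z in that compact set and all sufficiently small r > 0, where (z;q)_∞ = ∏_{k≥0}(1 − z q^k) and log is the branch obtained by summing log(1−zq^k). -/
/-!
Expanding each logarithm and summing the double series in the other order gives
`−log (z;q)_∞ = ∑_{n≥1} zⁿ / (n (1 − qⁿ))`. With `q = e^{−r}`, the `n`-th coefficient differs from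
the dilogarithm coefficient `1 / (n² r)` by `n⁻¹ ((1 − e^{−nr})⁻¹ − (nr)⁻¹)`, and
`0 ≤ (1 − e^{−x})⁻¹ − x⁻¹ ≤ 1` for `x > 0`. Hence the difference is bounded by `∑ |z|ⁿ = |z| / (1 − |z|)`,
uniformly in `r`.
-/

open Complex

lemma Real.inv_one_sub_exp_neg_sub_inv_mem_Icc {x : ℝ} (hx : 0 < x) :
    (1 - Real.exp (-x))⁻¹ - x⁻¹ ∈ Set.Icc 0 1 := by
  have hpos : 0 < 1 - Real.exp (-x) := by simp [hx]
  constructor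
  · have hle : 1 - Real.exp (-x) ≤ x := by linarith [Real.add_one_le_exp (-x)]
    exact sub_nonneg.mpr (inv_anti₀ hpos hle)
  · have hmul : (1 + x) * Real.exp (-x) ≤ 1 := by
      rw [Real.exp_neg, ← div_eq_mul_inv, div_le_one (Real.exp_pos x)]
      linarith [Real.add_one_le_exp x]
    have hinv : 1 / (1 - Real.exp (-x)) ≤ (1 + x) / x := by
      rw [div_le_div_iff₀ hpos hx]; linarith
    calc (1 - Real.exp (-x))⁻¹ - x⁻¹ ≤ (1 + x) / x - x⁻¹ := by rw [← one_div]; linarith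
      _ = 1 := by field_simp; ring

lemma hasSum_neg_log_qPochhammer {z q : ℂ} (hz : ‖z‖ < 1) (hq : ‖q‖ < 1) :
    HasSum (fun n : ℕ => z ^ (n + 1) / ((n + 1) * (1 - q ^ (n + 1))))
      (-∑' k : ℕ, log (1 - z * q ^ k)) := by
  set F : ℕ × ℕ → ℂ := fun p => (z * q ^ p.1) ^ (p.2 + 1) / ((p.2 : ℂ) + 1) with hF
  have hzq : ∀ k : ℕ, ‖z * q ^ k‖ ≤ ‖z‖ := fun k => by
    rw [norm_mul, norm_pow]
    exact mul_le_of_le_one_right (norm_nonneg z) (pow_le_one₀ (norm_nonneg q) hq.le)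
  have hF_le : ∀ p : ℕ × ℕ, ‖F p‖ ≤ ‖q‖ ^ p.1 * ‖z‖ ^ (p.2 + 1) := fun ⟨k, n⟩ => by
    have hn : (1 : ℝ) ≤ ‖(n : ℂ) + 1‖ := by norm_cast; simp
    calc ‖F (k, n)‖ ≤ ‖z * q ^ k‖ ^ (n + 1) := by
          rw [hF, norm_div, norm_pow]; exact div_le_self (by positivity) hn
      _ = ‖z‖ ^ (n + 1) * (‖q‖ ^ k) ^ (n + 1) := by rw [norm_mul, norm_pow, mul_pow]
      _ ≤ ‖z‖ ^ (n + 1) * ‖q‖ ^ k := by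
          gcongr
          exact pow_le_of_le_one (by positivity) (pow_le_one₀ (norm_nonneg q) hq.le)
            n.succ_ne_zero
      _ = ‖q‖ ^ k * ‖z‖ ^ (n + 1) := mul_comm _ _
  have hF_summable : Summable F := by
    have hgeo_q := summable_geometric_of_lt_one (norm_nonneg q) hq
    have hgeo_z : Summable fun n : ℕ => ‖z‖ ^ (n + 1) :=
      (summable_nat_add_iff 1).mpr (summable_geometric_of_lt_one (norm_nonneg z) hz)
    exact .of_norm_bounded (hgeo_q.mul_of_nonneg hgeo_z (fun _ => by positivity)
      (fun _ => by positivity)) hF_le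
  have hrow : ∀ k : ℕ, HasSum (fun n => F (k, n)) (-log (1 - z * q ^ k)) := fun k =>
    hasSum_taylorSeries_neg_log' (z := z * q ^ k) ((hzq k).trans_lt hz)
  have hcol : ∀ n : ℕ, HasSum (fun k => F (Prod.swap (n, k)))
      (z ^ (n + 1) / ((n + 1) * (1 - q ^ (n + 1)))) := fun n => by
    have hqn : ‖q ^ (n + 1)‖ < 1 := by
      rw [norm_pow]; exact pow_lt_one₀ (norm_nonneg q) hq n.succ_ne_zero
    rw [div_mul_eq_div_div, div_eq_mul_inv _ (1 - _)]
    refine ((hasSum_geometric_of_norm_lt_one hqn).mul_left _).congr_fun fun k => ?_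
    simp only [hF, Prod.swap, mul_pow, ← pow_mul]
    ring
  have hcols := hF_summable.prod_symm.hasSum.prod_fiberwise hcol
  rw [← tsum_neg, (hF_summable.hasSum.prod_fiberwise hrow).tsum_eq,
    ← (Equiv.prodComm ℕ ℕ).tsum_eq]
  exact hcols

lemma norm_qPochhammer_term_sub_dilog_term_le {r : ℝ} (hr : 0 < r) (z : ℂ) (n : ℕ) :
    ‖z ^ (n + 1) / ((n + 1) * (1 - (Real.exp (-r) : ℂ) ^ (n + 1)))
        - 1 / (r : ℂ) * (z ^ (n + 1) / ((n : ℂ) + 1) ^ 2)‖ ≤ ‖z‖ ^ (n + 1) := by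
  set m : ℝ := n + 1 with hm
  have hmr : 0 < m * r := by positivity
  obtain ⟨h0, h1⟩ := Real.inv_one_sub_exp_neg_sub_inv_mem_Icc hmr
  have hexp : (Real.exp (-r) : ℂ) ^ (n + 1) = (Real.exp (-(m * r)) : ℂ) := by
    rw [← ofReal_pow, ← Real.exp_nat_mul]; simp [hm]
  have hne : (1 : ℂ) - (Real.exp (-(m * r)) : ℂ) ≠ 0 := by
    rw [← ofReal_one, ← ofReal_sub, ofReal_ne_zero, sub_ne_zero]
    exact (Real.exp_lt_one_iff.mpr (by linarith)).ne'
  have hm0 : (m : ℂ) ≠ 0 := by exact_mod_cast (by positivity : m ≠ 0)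
  have hr0 : (r : ℂ) ≠ 0 := by exact_mod_cast hr.ne'
  have key : z ^ (n + 1) / ((n + 1) * (1 - (Real.exp (-r) : ℂ) ^ (n + 1)))
        - 1 / (r : ℂ) * (z ^ (n + 1) / ((n : ℂ) + 1) ^ 2)
      = z ^ (n + 1) * (((1 - Real.exp (-(m * r)))⁻¹ - (m * r)⁻¹) / m : ℝ) := by
    rw [hexp, show ((n : ℂ) + 1) = (m : ℂ) by simp [hm]]
    simp only [ofReal_div, ofReal_sub, ofReal_inv, ofReal_mul, ofReal_one]
    field_simp
  rw [key, norm_mul, norm_pow, norm_real, Real.norm_of_nonneg (by positivity)]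
  refine mul_le_of_le_one_right (by positivity) ?_
  rw [div_le_one (by positivity)]
  linarith [show (1 : ℝ) ≤ m by simp [hm]]

theorem norm_neg_log_qPochhammer_sub_dilog_le {z : ℂ} (hz : ‖z‖ < 1) {r : ℝ} (hr : 0 < r) :
    ‖(-∑' k : ℕ, log (1 - z * (Real.exp (-r) : ℂ) ^ k))
        - (1 / (r : ℂ)) * ∑' n : ℕ, z ^ (n + 1) / ((n : ℂ) + 1) ^ 2‖ ≤ ‖z‖ / (1 - ‖z‖) := by
  have hq : ‖(Real.exp (-r) : ℂ)‖ < 1 := by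
    rw [norm_real, Real.norm_of_nonneg (Real.exp_pos _).le, Real.exp_lt_one_iff]
    linarith
  have hgeo : HasSum (fun n : ℕ => ‖z‖ ^ (n + 1)) (‖z‖ / (1 - ‖z‖)) := by
    rw [div_eq_mul_inv]
    exact ((hasSum_geometric_of_lt_one (norm_nonneg z) hz).mul_left ‖z‖).congr_fun
      fun n => pow_succ' _ _
  have hdilog : Summable fun n : ℕ => z ^ (n + 1) / ((n : ℂ) + 1) ^ 2 := by
    refine hgeo.summable.of_norm_bounded fun n => ?_
    have hn : (1 : ℝ) ≤ ‖(n : ℂ) + 1‖ := by norm_cast; simp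
    rw [norm_div, norm_pow, norm_pow]
    exact div_le_self (by positivity) (one_le_pow₀ hn)
  have hqPoch := hasSum_neg_log_qPochhammer hz hq
  rw [← hqPoch.tsum_eq, ← tsum_mul_left, ← hqPoch.summable.tsum_sub (hdilog.mul_left _)]
  exact tsum_of_norm_bounded hgeo (norm_qPochhammer_term_sub_dilog_term_le hr z)

/-- Dilogarithm asymptotics of the q-Pochhammer symbol: with `q = e^{−r}`, uniformly on
compact subsets of the open unit disc,
`−log (z;q)_∞ = r^{−1}·dilog(1−z) + O(1)` as `r → 0⁺`, where
`log (z;q)_∞ = ∑_{k≥0} log(1−z q^k)` and `dilog(1−z) = ∑_{n≥1} zⁿ/n²`. -/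
theorem qPochhammer_dilog_asymptotics
    (K : Set ℂ) (hK : IsCompact K) (hK1 : K ⊆ Metric.ball (0 : ℂ) 1) :
    ∃ C > 0, ∃ r₀ > 0, ∀ r : ℝ, 0 < r → r < r₀ → ∀ z ∈ K,
      ‖(-∑' k : ℕ, Complex.log (1 - z * (Real.exp (-r) : ℂ) ^ k))
          - (1 / (r : ℂ)) * ∑' n : ℕ, z ^ (n + 1) / ((n : ℂ) + 1) ^ 2‖ ≤ C := by
  obtain ⟨ρ, hρ, hKρ⟩ := exists_lt_subset_ball hK.isClosed hK1
  refine ⟨(1 - ρ)⁻¹, inv_pos.mpr (sub_pos.mpr hρ), 1, one_pos, fun r hr _ z hzK => ?_⟩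
  have hzρ : ‖z‖ < ρ := mem_ball_zero_iff.mp (hKρ hzK)
  calc _ ≤ ‖z‖ / (1 - ‖z‖) := norm_neg_log_qPochhammer_sub_dilog_le (hzρ.trans hρ) hr
    _ ≤ 1 / (1 - ρ) := by gcongr; linarith
    _ = (1 - ρ)⁻¹ := one_div _
end

section
/- Fix τ > 0 and χ ∈ ℝ, and define S(z; τ, χ) = −(τ/2 + χ)·Log z − dilog(1 − 1/z) + dilog(1 − e^{−τ} z) on a neighborhood of the circle |z| = e^{τ/2} minus the negative reals. Then Re S(z; τ, χ) = −(τ/2)·(τ/2 + χ) for all z with |z| = e^{τ/2} off the negative real axis. -/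
/-! On the circle `|z| = e^{τ/2}` one has `e^{-τ} z = conj (1/z)`, and the dilogarithm series has
real coefficients, so the two dilogarithms in `S` are complex conjugates and cancel in `Re S`.
What remains is `-(τ/2 + χ) · Re (Log z) = -(τ/2 + χ) · log |z| = -(τ/2)(τ/2 + χ)`. -/

open ComplexConjugate

theorem conj_one_div_eq_of_norm_eq_exp {z : ℂ} {s : ℝ} (hz : ‖z‖ = Real.exp s) :
    conj (1 / z) = (Real.exp (-(2 * s)) : ℂ) * z := by
  rw [one_div, Complex.inv_def, map_mul, Complex.conj_conj, Complex.conj_ofReal,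
    Complex.normSq_eq_norm_sq, hz, ← Real.exp_nat_mul, ← Real.exp_neg, mul_comm]
  push_cast
  ring_nf

theorem tsum_conj_pow_div_sq (w : ℂ) :
    ∑' n : ℕ, conj w ^ (n + 1) / ((n : ℂ) + 1) ^ 2
      = conj (∑' n : ℕ, w ^ (n + 1) / ((n : ℂ) + 1) ^ 2) := by
  rw [Complex.conj_tsum]
  simp only [map_div₀, map_pow, map_add, map_natCast, map_one]

theorem re_phase_constant_on_circle_general (τ χ : ℝ) :
    ∀ z : ℂ, ‖z‖ = Real.exp (τ / 2) → ¬(z.im = 0 ∧ z.re ≤ 0) →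
      ((-(((τ / 2 + χ) : ℝ) : ℂ) * Complex.log z
          - ∑' n : ℕ, (1 / z) ^ (n + 1) / ((n : ℂ) + 1) ^ 2
          + ∑' n : ℕ, ((Real.exp (-τ) : ℂ) * z) ^ (n + 1) / ((n : ℂ) + 1) ^ 2).re)
        = -(τ / 2) * (τ / 2 + χ) := by
  intro z hz _
  have hconj : (Real.exp (-τ) : ℂ) * z = conj (1 / z) := by
    rw [conj_one_div_eq_of_norm_eq_exp hz]
    ring_nf
  rw [hconj, tsum_conj_pow_div_sq, Complex.add_re, Complex.sub_re, Complex.conj_re,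
    sub_add_cancel, ← Complex.ofReal_neg, Complex.re_ofReal_mul, Complex.log_re, hz, Real.log_exp]
  ring

/-- Okounkov–Reshetikhin phase function for plane partitions: for `τ > 0`, `χ ∈ ℝ`,
`S(z;τ,χ) = −(τ/2+χ)·Log z − dilog(1−1/z) + dilog(1−e^{−τ}z)` has constant real part
`−(τ/2)(τ/2+χ)` on the circle `|z| = e^{τ/2}` off the negative real axis. -/
theorem re_phase_constant_on_circle (τ χ : ℝ) (hτ : 0 < τ) :
    ∀ z : ℂ, ‖z‖ = Real.exp (τ / 2) → ¬(z.im = 0 ∧ z.re ≤ 0) →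
      ((-(((τ / 2 + χ) : ℝ) : ℂ) * Complex.log z
          - ∑' n : ℕ, (1 / z) ^ (n + 1) / ((n : ℂ) + 1) ^ 2
          + ∑' n : ℕ, ((Real.exp (-τ) : ℂ) * z) ^ (n + 1) / ((n : ℂ) + 1) ^ 2).re)
        = -(τ / 2) * (τ / 2 + χ) :=
  re_phase_constant_on_circle_general τ χ
end
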